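/- Let b ≥ 2 be an integer and φ as defined. Then for all s > 0, φ(s) ≤ b·(1 − Φ(s)), where Φ(s) = ∫_{−∞}^s φ(s') ds'. -/

import Mathlib

open Real MeasureTheory

/-- The piecewise density φ with parameter b. -/
noncomputable def phi (b : ℤ) (s : ℝ) : ℝ :=
  if s ≤ 0 then 0
  else if s ≤ 1 / b then (2 / 3) * (b : ℝ) ^ 2 * s
  else (2 / 3) * Real.exp 1 * (b : ℝ) * Real.exp (-(b : ℝ) * s)

/-- The CDF of φ. -/
noncomputable def Phi (b : ℤ) (s : ℝ) : ℝ := ∫ s' in Set.Iic s, phi b s'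

/-!
On `(0, 1/b]` the CDF is `Φ(s) = b²s²/3`, and with `t = b s ∈ (0, 1]` the claim becomes
`2t/3 ≤ 1 - t²/3`, i.e. `(t + 3)(t - 1) ≤ 0`. Beyond `1/b` the tail is exactly exponential,
`1 - Φ(s) = (2/3) e e^{-bs}`, so there `φ = b (1 - Φ)` holds with equality.
-/

open Set

lemma phi_of_nonpos (b : ℤ) {s : ℝ} (hs : s ≤ 0) : phi b s = 0 := by
  simp [phi, hs]

lemma phi_of_mem_Icc (b : ℤ) {s : ℝ} (hs : s ∈ Icc 0 (1 / (b : ℝ))) :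
    phi b s = (2 / 3) * (b : ℝ) ^ 2 * s := by
  rcases hs.1.eq_or_lt with rfl | hs0
  · simp [phi]
  · rw [phi, if_neg hs0.not_ge, if_pos hs.2]

lemma phi_of_one_div_lt {b : ℤ} (hb : 0 < b) {s : ℝ} (hs : 1 / (b : ℝ) < s) :
    phi b s = (2 / 3) * exp 1 * b * exp (-b * s) := by
  have hs0 : 0 < s := lt_trans (by positivity) hs
  rw [phi, if_neg hs0.not_ge, if_neg hs.not_ge]

lemma exp_one_mul_exp_neg_mul_one_div {b : ℝ} (hb : b ≠ 0) :
    exp 1 * exp (-b * (1 / b)) = 1 := by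
  rw [← exp_add, neg_mul, mul_one_div_cancel hb, add_neg_cancel, exp_zero]

lemma continuous_phi {b : ℤ} (hb : 0 < b) : Continuous (phi b) := by
  have hb' : (0 : ℝ) < b := Int.cast_pos.mpr hb
  have hlin : Continuous fun s : ℝ => (2 / 3) * (b : ℝ) ^ 2 * s := by fun_prop
  refine continuous_const.if_le (hlin.if_le (by fun_prop) continuous_id continuous_const ?_)
    continuous_id continuous_const ?_
  · rintro s rfl
    linear_combination (2 / 3) * (b : ℝ) * (mul_one_div_cancel hb'.ne' -
      exp_one_mul_exp_neg_mul_one_div hb'.ne')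
  · rintro s rfl
    simp [hb.not_gt]

lemma integrableOn_phi_Iic {b : ℤ} (hb : 0 < b) (s : ℝ) : IntegrableOn (phi b) (Iic s) := by
  have hzero : IntegrableOn (phi b) (Iic 0) :=
    integrableOn_zero.congr_fun (fun x hx => (phi_of_nonpos b hx).symm) measurableSet_Iic
  exact (hzero.union ((continuous_phi hb).integrableOn_Icc (a := 0) (b := s))).mono_set
    (fun x hx => (le_total x 0).imp id fun h => ⟨h, hx⟩)

lemma Phi_eq_intervalIntegral {b : ℤ} (hb : 0 < b) (s : ℝ) :
    Phi b s = ∫ x in (0 : ℝ)..s, phi b x := by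
  have hzero : ∫ x in Iic (0 : ℝ), phi b x = 0 :=
    setIntegral_eq_zero_of_forall_eq_zero fun x hx => phi_of_nonpos b hx
  rw [← intervalIntegral.integral_Iic_sub_Iic (integrableOn_phi_Iic hb 0)
    (integrableOn_phi_Iic hb s), hzero, sub_zero, Phi]

lemma Phi_of_mem_Icc {b : ℤ} (hb : 0 < b) {s : ℝ} (hs : s ∈ Icc 0 (1 / (b : ℝ))) :
    Phi b s = (b : ℝ) ^ 2 * s ^ 2 / 3 := by
  have hphi : EqOn (phi b) (fun x => (2 / 3) * (b : ℝ) ^ 2 * x) (uIcc 0 s) := fun x hx =>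
    phi_of_mem_Icc b ⟨(uIcc_of_le hs.1 ▸ hx).1, (uIcc_of_le hs.1 ▸ hx).2.trans hs.2⟩
  rw [Phi_eq_intervalIntegral hb, intervalIntegral.integral_congr hphi,
    intervalIntegral.integral_const_mul, integral_id]
  ring

lemma one_sub_Phi_of_one_div_le {b : ℤ} (hb : 0 < b) {s : ℝ} (hs : 1 / (b : ℝ) ≤ s) :
    1 - Phi b s = (2 / 3) * exp 1 * exp (-b * s) := by
  have hb' : (0 : ℝ) < b := Int.cast_pos.mpr hb
  have hbreak : 0 ≤ 1 / (b : ℝ) := by positivity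
  have hint : ∀ u v : ℝ, IntervalIntegrable (phi b) volume u v := fun u v =>
    (continuous_phi hb).intervalIntegrable u v
  have hhead : ∫ x in (0 : ℝ)..1 / b, phi b x = 1 / 3 := by
    rw [← Phi_eq_intervalIntegral hb, Phi_of_mem_Icc hb ⟨hbreak, le_rfl⟩]
    field_simp
  have htail : ∫ x in 1 / (b : ℝ)..s, phi b x
      = -(2 / 3) * exp 1 * exp (-b * s) - -(2 / 3) * exp 1 * exp (-b * (1 / b)) := by
    refine intervalIntegral.integral_eq_sub_of_hasDerivAt_of_le
      (f := fun x => -(2 / 3) * exp 1 * exp (-b * x)) hs (by fun_prop) (fun x hx => ?_) (hint _ _)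
    rw [phi_of_one_div_lt hb hx.1]
    exact (((hasDerivAt_id x).const_mul (-(b : ℝ))).exp.const_mul (-(2 / 3) * exp 1)).congr_deriv
      (by simp only [id]; ring)
  rw [Phi_eq_intervalIntegral hb, ← intervalIntegral.integral_add_adjacent_intervals (hint _ _)
    (hint _ _), hhead, htail]
  linear_combination -(2 / 3) * exp_one_mul_exp_neg_mul_one_div hb'.ne'

theorem phi_le_b_mul_tail (b : ℤ) (hb : 2 ≤ b) :
    ∀ s : ℝ, 0 < s → phi b s ≤ (b : ℝ) * (1 - Phi b s) := by
  intro s hs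
  have hb0 : 0 < b := by omega
  have hb' : (0 : ℝ) < b := Int.cast_pos.mpr hb0
  rcases le_or_gt s (1 / b) with hsb | hsb
  · rw [phi_of_mem_Icc b ⟨hs.le, hsb⟩, Phi_of_mem_Icc hb0 ⟨hs.le, hsb⟩]
    have hbs : b * s ≤ 1 := by rwa [le_div_iff₀ hb', mul_comm] at hsb
    nlinarith [mul_nonneg hb'.le (mul_nonneg (sub_nonneg.2 hbs) (by positivity : 0 ≤ b * s + 3))]
  · rw [phi_of_one_div_lt hb0 hsb, one_sub_Phi_of_one_div_le hb0 hsb.le]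
    exact le_of_eq (by ring)
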